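/- arXiv:1302.3763 — 3 statements merged into one kernel-verified Lean document; each statement's English description precedes it below -/
import Mathlib

section
/- Let G be an n-vertex simple graph with average degree at most d and maximum degree at most D, where d ≥ 1. Then there exists a set A of at least ⌈n/(2+4dD)⌉ vertices, each of degree at most 2d, such that for any two distinct vertices x, y ∈ A, the closed neighborhoods N[x] and N[y] are disjoint. -/
open Finset Classical

/-- In an `n`-vertex graph of average degree at most `d ≥ 1` and maximum degree
at most `D`, one can find `⌈n/(2+4dD)⌉` vertices of degree at most `2d`
with pairwise disjoint closed neighbourhoods. -/
theorem exists_scattered_low_degree_set {V : Type*} [Fintype V] [DecidableEq V]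
    (G : SimpleGraph V) [DecidableRel G.Adj] (d D : ℝ) (hd : 1 ≤ d)
    (havg : 2 * (G.edgeFinset.card : ℝ) ≤ d * Fintype.card V)
    (hmax : ∀ v : V, (G.degree v : ℝ) ≤ D) :
    ∃ A : Finset V,
      ⌈(Fintype.card V : ℝ) / (2 + 4 * d * D)⌉₊ ≤ A.card ∧
      (∀ x ∈ A, (G.degree x : ℝ) ≤ 2 * d) ∧
      (A : Set V).Pairwise fun x y =>
        Disjoint (insert x (G.neighborSet x)) (insert y (G.neighborSet y)) := by
  classical
  obtain hV | hV := isEmpty_or_nonempty V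
  · refine ⟨∅, ?_, by simp, by simp⟩
    simp [Fintype.card_eq_zero]
  -- D ≥ 0
  obtain ⟨v0⟩ := hV
  have hD0 : (0:ℝ) ≤ D := le_trans (by positivity) (hmax v0)
  have hd0 : (0:ℝ) < d := lt_of_lt_of_le one_pos hd
  have hpos : (0:ℝ) < 2 + 4 * d * D := by positivity
  set n := Fintype.card V with hn
  -- closed neighborhood as Finset
  set cn : V → Finset V := fun x => insert x (G.neighborFinset x) with hcn
  have hcn_card : ∀ x, (cn x).card = G.degree x + 1 := by
    intro x
    rw [hcn]
    rw [Finset.card_insert_of_notMem (G.notMem_neighborFinset_self x),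
      G.card_neighborFinset_eq_degree]
  have hxcn : ∀ x, x ∈ cn x := fun x => Finset.mem_insert_self _ _
  -- low degree vertices
  set L : Finset V := Finset.univ.filter (fun v => (G.degree v : ℝ) ≤ 2 * d) with hL
  -- n ≤ 2 |L|
  have hLcard : (n : ℝ) ≤ 2 * L.card := by
    have hsum : ∑ v, (G.degree v : ℝ) = 2 * G.edgeFinset.card := by
      rw [← Nat.cast_sum]
      rw_mod_cast [G.sum_degrees_eq_twice_card_edges]
    have hsplit : ∑ v, (G.degree v : ℝ) =
        ∑ v ∈ L, (G.degree v : ℝ) + ∑ v ∈ Lᶜ, (G.degree v : ℝ) :=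
      (Finset.sum_add_sum_compl L _).symm
    have h1 : (2 * d) * (Lᶜ.card : ℝ) ≤ ∑ v ∈ Lᶜ, (G.degree v : ℝ) := by
      calc (2 * d) * (Lᶜ.card : ℝ) = ∑ _v ∈ Lᶜ, 2 * d := by
            rw [Finset.sum_const, nsmul_eq_mul]; ring
        _ ≤ ∑ v ∈ Lᶜ, (G.degree v : ℝ) := by
            refine Finset.sum_le_sum fun v hv => ?_
            simp only [hL, Finset.mem_compl, Finset.mem_filter, Finset.mem_univ,
              true_and, not_le] at hv
            exact hv.le
    have h2 : (0:ℝ) ≤ ∑ v ∈ L, (G.degree v : ℝ) :=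
      Finset.sum_nonneg fun v _ => by positivity
    have h3 : (2 * d) * (Lᶜ.card : ℝ) ≤ d * n := by
      calc (2 * d) * (Lᶜ.card : ℝ) ≤ ∑ v ∈ Lᶜ, (G.degree v : ℝ) := h1
        _ ≤ ∑ v, (G.degree v : ℝ) := by rw [hsplit]; linarith
        _ = 2 * G.edgeFinset.card := hsum
        _ ≤ d * n := havg
    have h4 : (Lᶜ.card : ℝ) ≤ n / 2 := by
      rw [le_div_iff₀ (by norm_num : (0:ℝ) < 2)]
      nlinarith
    have h5 : (Lᶜ.card : ℝ) = n - L.card := by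
      have := Finset.card_add_card_compl L
      rw [hn]
      push_cast [← this]
      ring
    linarith [h5 ▸ h4]
  -- maximal A
  set S : Finset (Finset V) := L.powerset.filter
    (fun A => ∀ x ∈ A, ∀ y ∈ A, x ≠ y → Disjoint (cn x) (cn y)) with hS
  have hSne : S.Nonempty := ⟨∅, by simp [hS]⟩
  obtain ⟨A, hAS, hAmax⟩ := S.exists_max_image Finset.card hSne
  simp only [hS, Finset.mem_filter, Finset.mem_powerset] at hAS
  obtain ⟨hAL, hApair⟩ := hAS
  -- every y in L conflicts with some x in A
  have hconf : ∀ y ∈ L, ∃ x ∈ A, ¬ Disjoint (cn x) (cn y) := by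
    intro y hy
    by_contra h
    push_neg at h
    have hyA : y ∉ A := fun hyA =>
      Finset.not_disjoint_iff.mpr ⟨y, hxcn y, hxcn y⟩ (h y hyA)
    have : insert y A ∈ S := by
      simp only [hS, Finset.mem_filter, Finset.mem_powerset]
      refine ⟨Finset.insert_subset hy hAL, ?_⟩
      intro a ha b hb hab
      rcases Finset.mem_insert.mp ha with ha' | ha <;>
        rcases Finset.mem_insert.mp hb with hb' | hb
      · exact absurd (ha'.trans hb'.symm) hab
      · exact ha' ▸ (h b hb).symm
      · exact hb' ▸ h a ha
      · exact hApair a ha b hb hab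
    have := hAmax _ this
    rw [Finset.card_insert_of_notMem hyA] at this
    omega
  -- "ball" of radius 2 around x
  set ball : V → Finset V := fun x =>
    insert x ((G.neighborFinset x).biUnion cn) with hball
  have hconf_ball : ∀ x y, ¬ Disjoint (cn x) (cn y) → y ∈ ball x := by
    intro x y hxy
    obtain ⟨z, hzx, hzy⟩ := Finset.not_disjoint_iff.mp hxy
    rw [hcn] at hzx hzy
    simp only [Finset.mem_insert, SimpleGraph.mem_neighborFinset] at hzx hzy
    rw [hball]
    simp only [Finset.mem_insert, Finset.mem_biUnion, SimpleGraph.mem_neighborFinset]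
    rcases hzx with rfl | hzx
    · rcases hzy with rfl | hzy
      · exact Or.inl rfl
      · exact Or.inr ⟨y, hzy.symm, hxcn y⟩
    · rcases hzy with rfl | hzy
      · exact Or.inr ⟨z, hzx, hxcn z⟩
      · exact Or.inr ⟨z, hzx, by rw [hcn]; simp [hzy.symm]⟩
  -- card of ball
  have hball_card : ∀ x ∈ L, ((ball x).card : ℝ) ≤ 1 + 2 * d * D := by
    intro x hxL
    have hsub : ball x ⊆ insert x ((G.neighborFinset x).biUnion (fun z => (cn z).erase x)) := by
      rw [hball]
      intro y hy
      rcases Finset.mem_insert.mp hy with rfl | hy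
      · exact Finset.mem_insert_self _ _
      · obtain ⟨z, hz, hyz⟩ := Finset.mem_biUnion.mp hy
        by_cases hyx : y = x
        · exact hyx ▸ Finset.mem_insert_self _ _
        · exact Finset.mem_insert_of_mem (Finset.mem_biUnion.mpr ⟨z, hz,
            Finset.mem_erase.mpr ⟨hyx, hyz⟩⟩)
    have h1 : (ball x).card ≤ (∑ z ∈ G.neighborFinset x, ((cn z).erase x).card) + 1 := by
      calc (ball x).card ≤ _ := Finset.card_le_card hsub
        _ ≤ ((G.neighborFinset x).biUnion (fun z => (cn z).erase x)).card + 1 :=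
          Finset.card_insert_le _ _
        _ ≤ (∑ z ∈ G.neighborFinset x, ((cn z).erase x).card) + 1 := by
          gcongr; exact Finset.card_biUnion_le
    have h2 : ∀ z ∈ G.neighborFinset x, (((cn z).erase x).card : ℝ) ≤ D := by
      intro z hz
      have hxz : x ∈ cn z := by
        rw [hcn]
        simp only [Finset.mem_insert, SimpleGraph.mem_neighborFinset]
        have hadj : G.Adj x z := by simpa using hz
        exact Or.inr hadj.symm
      have : ((cn z).erase x).card = (cn z).card - 1 := Finset.card_erase_of_mem hxz
      rw [this, hcn_card]
      simpa using hmax z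
    have h3 : (∑ z ∈ G.neighborFinset x, (((cn z).erase x).card : ℝ)) ≤ (G.degree x : ℝ) * D := by
      calc (∑ z ∈ G.neighborFinset x, (((cn z).erase x).card : ℝ))
          ≤ ∑ z ∈ G.neighborFinset x, D := Finset.sum_le_sum h2
        _ = (G.degree x : ℝ) * D := by
          rw [Finset.sum_const, G.card_neighborFinset_eq_degree, nsmul_eq_mul]
    have hdegx : (G.degree x : ℝ) ≤ 2 * d := by
      simp only [hL, Finset.mem_filter] at hxL; exact hxL.2
    have h4 : (G.degree x : ℝ) * D ≤ 2 * d * D := by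
      exact mul_le_mul_of_nonneg_right hdegx hD0
    have h1' : ((ball x).card : ℝ) ≤ (∑ z ∈ G.neighborFinset x, (((cn z).erase x).card : ℝ)) + 1 := by
      push_cast [← Nat.cast_sum]
      exact_mod_cast h1
    linarith
  -- L covered by balls
  have hcover : L ⊆ A.biUnion ball := by
    intro y hy
    obtain ⟨x, hxA, hxy⟩ := hconf y hy
    exact Finset.mem_biUnion.mpr ⟨x, hxA, hconf_ball x y hxy⟩
  have hLA : (L.card : ℝ) ≤ A.card * (1 + 2 * d * D) := by
    have h1 : L.card ≤ ∑ x ∈ A, (ball x).card :=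
      le_trans (Finset.card_le_card hcover) Finset.card_biUnion_le
    have h2 : (∑ x ∈ A, ((ball x).card : ℝ)) ≤ ∑ x ∈ A, (1 + 2 * d * D) :=
      Finset.sum_le_sum (fun x hx => hball_card x (hAL hx))
    have h3 : (∑ x ∈ A, ((1:ℝ) + 2 * d * D)) = A.card * (1 + 2 * d * D) := by
      rw [Finset.sum_const, nsmul_eq_mul]
    calc (L.card : ℝ) ≤ ∑ x ∈ A, ((ball x).card : ℝ) := by exact_mod_cast h1
      _ ≤ _ := h2
      _ = _ := h3
  refine ⟨A, ?_, ?_, ?_⟩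
  · rw [Nat.ceil_le]
    rw [div_le_iff₀ hpos]
    nlinarith [hLcard, hLA]
  · intro x hx
    have := hAL hx
    simp only [hL, Finset.mem_filter] at this
    exact this.2
  · intro x hx y hy hxy
    have := hApair x hx y hy hxy
    have hcast : ∀ z : V, ((cn z : Finset V) : Set V) = insert z (G.neighborSet z) := by
      intro z
      rw [hcn]
      push_cast
      simp [SimpleGraph.neighborFinset]
    rw [← hcast x, ← hcast y]
    exact_mod_cast this
end

section
/- Let G = (V, E) be a graph on n vertices with n even, V = {v₀,…,v_{n−1}}. Let G′ be the multigraph on vertices {v₀′,…,v′_{n/2−1}} where each edge v_a v_b ∈ E gives one edge v′_{⌊a/2⌋} v′_{⌊b/2⌋} in G′ labeled with the pair {v_a, v_b} (self-loops and parallel edges allowed). Then the number of perfect matchings of G equals the number of cycle covers C of G′ such that the union of the labels of the edges of C equals V. -/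
/-! No edge of `G` is a loop, so the degree of `v'_j` in `C` is the sum of the degrees of
`v_{2j}` and `v_{2j+1}` in `C`; the label condition makes each of them at least `1`, so degree
`2` forces every vertex of `G` to lie in exactly one edge of `C`. Such sets `C` are exactly the
edge sets of perfect matchings of `G`, and a perfect matching is determined by its edge set. -/

/-- For an edge `e` of `G` (on vertex set `Fin (2*k)`), the number of endpoints of
the corresponding edge `v'_{⌊a/2⌋}v'_{⌊b/2⌋}` of `G'` that equal the vertex
`v'_j`; a self-loop contributes `2`. -/
def endpointCount (k : ℕ) (j : Fin k) (e : Sym2 (Fin (2 * k))) : ℕ :=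
  Sym2.lift ⟨fun a b =>
      (if a.val / 2 = j.val then 1 else 0) + (if b.val / 2 = j.val then 1 else 0),
    fun a b => add_comm _ _⟩ e

namespace SimpleGraph

variable {V : Type*} {G : SimpleGraph V}

theorem Subgraph.isPerfectMatching_iff_existsUnique_mem_edgeSet {M : G.Subgraph} :
    M.IsPerfectMatching ↔ ∀ v, ∃! e ∈ M.edgeSet, v ∈ e := by
  rw [isPerfectMatching_iff]
  refine forall_congr' fun v => ⟨?_, ?_⟩
  · rintro ⟨w, hw, huniq⟩
    refine ⟨s(v, w), ⟨hw, Sym2.mem_mk_left v w⟩, ?_⟩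
    rintro e ⟨he, hve⟩
    obtain ⟨u, rfl⟩ := Sym2.mem_iff_exists.1 hve
    rw [huniq u he]
  · rintro ⟨e, ⟨he, hve⟩, huniq⟩
    obtain ⟨w, rfl⟩ := Sym2.mem_iff_exists.1 hve
    exact ⟨w, he, fun u hu => Sym2.congr_right.1 (huniq s(v, u) ⟨hu, Sym2.mem_mk_left v u⟩)⟩

theorem fromEdgeSet_le_of_subset_edgeSet {S : Set (Sym2 V)} (hS : S ⊆ G.edgeSet) :
    fromEdgeSet S ≤ G :=
  (fromEdgeSet_le G).2 (Set.sdiff_subset.trans hS)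

theorem edgeSet_toSubgraph_fromEdgeSet {S : Set (Sym2 V)} (hS : S ⊆ G.edgeSet) :
    (G.toSubgraph (fromEdgeSet S) (fromEdgeSet_le_of_subset_edgeSet hS)).edgeSet = S := by
  rw [← Subgraph.edgeSet_spanningCoe]
  change (fromEdgeSet S).edgeSet = S
  rw [edgeSet_fromEdgeSet, sdiff_eq_left, ← Set.subset_compl_iff_disjoint_right]
  exact hS.trans G.edgeSet_subset_compl_diagSet

theorem ncard_isPerfectMatching_eq_ncard_exactCover [Finite V] :
    {M : G.Subgraph | M.IsPerfectMatching}.ncard =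
      {C : Finset (Sym2 V) | ↑C ⊆ G.edgeSet ∧ ∀ v, ∃! e ∈ C, v ∈ e}.ncard := by
  refine Set.ncard_congr (fun M _ => M.edgeSet.toFinite.toFinset) ?_ ?_ ?_
  · intro M hM
    refine ⟨by simpa using M.edgeSet_subset, ?_⟩
    simpa using Subgraph.isPerfectMatching_iff_existsUnique_mem_edgeSet.1 hM
  · intro M M' hM hM' h
    exact Subgraph.IsMatching.injOn_edgeSet hM.1 hM'.1 (by simpa using h)
  · rintro C ⟨hCG, hC⟩
    refine ⟨G.toSubgraph (fromEdgeSet ↑C) (fromEdgeSet_le_of_subset_edgeSet hCG), ?_, ?_⟩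
    · simpa [Subgraph.isPerfectMatching_iff_existsUnique_mem_edgeSet,
        edgeSet_toSubgraph_fromEdgeSet hCG] using hC
    · simp [edgeSet_toSubgraph_fromEdgeSet hCG]

end SimpleGraph

section

open Finset

variable {k : ℕ}

theorem endpointCount_eq_of_not_isDiag {e : Sym2 (Fin (2 * k))} (he : ¬e.IsDiag) {j : Fin k}
    {u v : Fin (2 * k)} (hu : u.val = 2 * j) (hv : v.val = 2 * j + 1) :
    endpointCount k j e = (if u ∈ e then 1 else 0) + (if v ∈ e then 1 else 0) := by
  induction e with
  | _ a b =>
    have hab : a.val ≠ b.val := fun h => he (Sym2.mk_isDiag_iff.2 (Fin.ext h))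
    simp only [endpointCount, Sym2.lift_mk, Sym2.mem_iff, Fin.ext_iff]
    split_ifs <;> omega

theorem sum_endpointCount_eq_card_add_card {C : Finset (Sym2 (Fin (2 * k)))}
    (hC : ∀ e ∈ C, ¬e.IsDiag) {j : Fin k} {u v : Fin (2 * k)}
    (hu : u.val = 2 * j) (hv : v.val = 2 * j + 1) :
    ∑ e ∈ C, endpointCount k j e = #{e ∈ C | u ∈ e} + #{e ∈ C | v ∈ e} := by
  rw [sum_congr rfl fun e he => endpointCount_eq_of_not_isDiag (hC e he) hu hv,
    sum_add_distrib, card_filter, card_filter]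

theorem sum_endpointCount_eq_two_and_covering_iff {C : Finset (Sym2 (Fin (2 * k)))}
    (hC : ∀ e ∈ C, ¬e.IsDiag) :
    ((∀ j : Fin k, ∑ e ∈ C, endpointCount k j e = 2) ∧ ∀ x, ∃ e ∈ C, x ∈ e) ↔
      ∀ x, ∃! e ∈ C, x ∈ e := by
  have card_eq_one_iff x : #{e ∈ C | x ∈ e} = 1 ↔ ∃! e ∈ C, x ∈ e := by
    rw [card_eq_one_iff_existsUnique]
    simp only [mem_filter]
  have card_pos_iff x : 0 < #{e ∈ C | x ∈ e} ↔ ∃ e ∈ C, x ∈ e := by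
    rw [card_pos, filter_nonempty_iff]
  simp only [← card_eq_one_iff, ← card_pos_iff]
  constructor
  · rintro ⟨hdeg, hpos⟩ x
    have hx := x.isLt
    let u : Fin (2 * k) := ⟨2 * (x / 2), by omega⟩
    let v : Fin (2 * k) := ⟨2 * (x / 2) + 1, by omega⟩
    have hsum := hdeg ⟨x / 2, by omega⟩
    rw [sum_endpointCount_eq_card_add_card hC (u := u) (v := v) rfl rfl] at hsum
    have hu := hpos u
    have hv := hpos v
    obtain hxu | hxv : x = u ∨ x = v := by simp only [u, v, Fin.ext_iff]; omega
    · rw [hxu]; omega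
    · rw [hxv]; omega
  · intro hone
    refine ⟨fun j => ?_, fun x => by simp [hone x]⟩
    rw [sum_endpointCount_eq_card_add_card hC (u := ⟨2 * j, by omega⟩)
      (v := ⟨2 * j + 1, by omega⟩) rfl rfl, hone, hone]

end

/-- Edges of `G'` are in bijection with their labels, so a set of edges of `G'` is recorded as
a set `C` of edges of `G`; the cycle-cover condition says that every `v'_j` has degree `2`
in `C`. -/
theorem card_perfectMatchings_eq_card_labelCovering_cycleCovers
    (k : ℕ) (G : SimpleGraph (Fin (2 * k))) :
    ({M : G.Subgraph | M.IsPerfectMatching} : Set G.Subgraph).ncard =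
      ({C : Finset (Sym2 (Fin (2 * k))) |
          ↑C ⊆ G.edgeSet ∧
          (∀ j : Fin k, ∑ e ∈ C, endpointCount k j e = 2) ∧
          (∀ x : Fin (2 * k), ∃ e ∈ C, x ∈ e)} :
        Set (Finset (Sym2 (Fin (2 * k))))).ncard := by
  rw [G.ncard_isPerfectMatching_eq_ncard_exactCover]
  congr 1
  ext C
  refine and_congr_right fun hCG => ?_
  exact (sum_endpointCount_eq_two_and_covering_iff fun e he =>
    G.not_isDiag_of_mem_edgeSet (hCG he)).symm
end

section
/- Let G be an n-vertex graph, s,t ∈ V(G), and let X ⊆ V(G)∖{s,t} belong to deg2sets(G,s,t), witnessed by an edge set F. If H is an induced subgraph of G and Z_X is the set of vertices x ∈ X ∩ V(H) such that no neighbor of x in H lies in X, then |Z_X| ≤ |V(G) ∖ (V(H) ∪ {s,t})| + 1. -/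
/-!
Every vertex of `Z_X` has `F`-degree `2`, and the other endpoint of each of its `F`-edges lies
outside `H ∪ {s,t}` or is one of `s, t`: an endpoint outside `X ∪ {s,t}` would have `F`-degree
`0`, and one in `X ∩ V(H)` would be an `H`-neighbour in `X`. In particular no `F`-edge joins two
vertices of `Z_X`, so the `F`-edges at `Z_X` are distinct and are counted again at their other
endpoints, where every vertex other than `s, t` has `F`-degree at most `2` and `s, t` at most `1`.
-/

open Finset

section EdgeCounting

variable {V : Type*} [DecidableEq V] (F : Finset (Sym2 V))

/-- The edge sets at distinct vertices of `A` are disjoint (an edge at two of them would have its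
other endpoint in `A`), and each edge at `A` is counted again at its endpoint in `B`. -/
theorem sum_card_filter_mem_le_of_forall_mem_eq {A B : Finset V}
    (h : ∀ e ∈ F, ∀ a ∈ A, a ∈ e → ∃ b ∈ B, b ∉ A ∧ e = s(a, b)) :
    ∑ a ∈ A, #(F.filter (a ∈ ·)) ≤ ∑ b ∈ B, #(F.filter (b ∈ ·)) := by
  have hdisj : (A : Set V).PairwiseDisjoint fun a => F.filter (a ∈ ·) := by
    intro a₁ ha₁ a₂ ha₂ hne
    refine disjoint_left.mpr fun e he₁ he₂ => ?_
    rw [mem_filter] at he₁ he₂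
    obtain ⟨b, -, hbA, rfl⟩ := h _ he₁.1 a₁ ha₁ he₁.2
    rcases Sym2.mem_iff.mp he₂.2 with rfl | rfl
    · exact hne rfl
    · exact hbA ha₂
  have hsub :
      A.biUnion (fun a => F.filter (a ∈ ·)) ⊆ B.biUnion (fun b => F.filter (b ∈ ·)) := by
    intro e he
    simp only [mem_biUnion, mem_filter] at he ⊢
    obtain ⟨a, ha, heF, hae⟩ := he
    obtain ⟨b, hb, -, rfl⟩ := h _ heF a ha hae
    exact ⟨b, hb, heF, Sym2.mem_mk_right a b⟩
  calc ∑ a ∈ A, #(F.filter (a ∈ ·)) = #(A.biUnion fun a => F.filter (a ∈ ·)) :=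
        (card_biUnion hdisj).symm
    _ ≤ #(B.biUnion fun b => F.filter (b ∈ ·)) := card_le_card hsub
    _ ≤ ∑ b ∈ B, #(F.filter (b ∈ ·)) := card_biUnion_le

theorem sum_card_filter_mem_union_pair_le {Y : Finset V} {s t : V} (hY : Disjoint Y {s, t})
    (hdegY : ∀ v ∈ Y, #(F.filter (v ∈ ·)) ≤ 2) (hs : #(F.filter (s ∈ ·)) ≤ 1)
    (ht : #(F.filter (t ∈ ·)) ≤ 1) :
    ∑ v ∈ Y ∪ {s, t}, #(F.filter (v ∈ ·)) ≤ 2 * #Y + 2 := by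
  have hsumY : ∑ v ∈ Y, #(F.filter (v ∈ ·)) ≤ #Y * 2 := sum_le_card_nsmul _ _ 2 hdegY
  have hsumst : ∑ v ∈ {s, t}, #(F.filter (v ∈ ·)) ≤ #{s, t} * 1 :=
    sum_le_card_nsmul _ _ 1 fun v hv => by
      rcases mem_insert.mp hv with rfl | hv
      · exact hs
      · exact mem_singleton.mp hv ▸ ht
  rw [sum_union hY]
  have := card_le_two (a := s) (b := t)
  omega

end EdgeCounting

theorem mem_compl_union_of_mk_mem {V : Type*} [Fintype V] [DecidableEq V] {G : SimpleGraph V}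
    {F : Finset (Sym2 V)} (hFE : ↑F ⊆ G.edgeSet) {X VH : Finset V} {s t z w : V}
    (hdeg0 : ∀ v : V, v ∉ X → v ≠ s → v ≠ t → #(F.filter (v ∈ ·)) = 0)
    (hz : ∀ y ∈ VH, G.Adj z y → y ∉ X) (hzw : s(z, w) ∈ F) :
    w ∈ univ \ (VH ∪ {s, t}) ∪ {s, t} := by
  by_cases hst : w = s ∨ w = t
  · rcases hst with rfl | rfl <;> simp
  push Not at hst
  have hwX : w ∈ X := by
    by_contra hwX
    exact card_ne_zero_of_mem (mem_filter.mpr ⟨hzw, Sym2.mem_mk_right z w⟩)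
      (hdeg0 w hwX hst.1 hst.2)
  have hwVH : w ∉ VH := fun h => hz w h (hFE hzw) hwX
  simp [hwVH, hst.1, hst.2]

open Classical in
theorem card_isolated_in_induced_le_general {V : Type*} [Fintype V] [DecidableEq V]
    (G : SimpleGraph V) (s t : V) (X : Finset V)
    (F : Finset (Sym2 V)) (hFE : ↑F ⊆ G.edgeSet)
    (hdeg0 : ∀ v : V, v ∉ X → v ≠ s → v ≠ t → (F.filter fun e => v ∈ e).card = 0)
    (hdeg2 : ∀ v ∈ X, (F.filter fun e => v ∈ e).card = 2)
    (hs : (F.filter fun e => s ∈ e).card ≤ 1)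
    (ht : (F.filter fun e => t ∈ e).card ≤ 1)
    (VH : Finset V) :
    ((X ∩ VH).filter fun x => ∀ y ∈ VH, G.Adj x y → y ∉ X).card ≤
      (Finset.univ \ (VH ∪ {s, t})).card + 1 := by
  set Z := (X ∩ VH).filter fun x => ∀ y ∈ VH, G.Adj x y → y ∉ X
  set Y := Finset.univ \ (VH ∪ {s, t})
  have hZ : ∀ z ∈ Z, z ∈ X ∧ z ∈ VH ∧ ∀ y ∈ VH, G.Adj z y → y ∉ X := by
    simp only [Z, mem_filter, mem_inter]
    exact fun z hz => ⟨hz.1.1, hz.1.2, hz.2⟩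
  have hendpoint :
      ∀ e ∈ F, ∀ z ∈ Z, z ∈ e → ∃ w ∈ Y ∪ {s, t}, w ∉ Z ∧ e = s(z, w) := by
    intro e heF z hzZ hze
    obtain ⟨w, rfl⟩ := Sym2.mem_iff_exists.mp hze
    obtain ⟨-, -, hno⟩ := hZ z hzZ
    exact ⟨w, mem_compl_union_of_mk_mem hFE hdeg0 hno heF,
      fun hwZ => hno w (hZ w hwZ).2.1 (hFE heF) (hZ w hwZ).1, rfl⟩
  have hdegY : ∀ y ∈ Y, #(F.filter (y ∈ ·)) ≤ 2 := by
    intro y hy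
    simp only [Y, mem_sdiff, mem_union, mem_insert, mem_singleton, not_or] at hy
    by_cases hyX : y ∈ X
    · exact (hdeg2 y hyX).le
    · simp [hdeg0 y hyX hy.2.2.1 hy.2.2.2]
  have hcount : 2 * #Z ≤ 2 * #Y + 2 :=
    calc 2 * #Z = ∑ z ∈ Z, #(F.filter (z ∈ ·)) := by
          rw [sum_congr rfl fun z hz => hdeg2 z (hZ z hz).1, sum_const, smul_eq_mul, mul_comm]
      _ ≤ ∑ v ∈ Y ∪ {s, t}, #(F.filter (v ∈ ·)) :=
          sum_card_filter_mem_le_of_forall_mem_eq F hendpoint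
      _ ≤ 2 * #Y + 2 := sum_card_filter_mem_union_pair_le F
          (disjoint_sdiff_self_left.mono_right subset_union_right) hdegY hs ht
  omega

open Classical in
/-- Let `X ∈ deg2sets(G,s,t)` with witness `F ⊆ E(G)` (every vertex outside
`X ∪ {s,t}` has `F`-degree `0`, every vertex of `X` has `F`-degree `2`, and `s,t`
have `F`-degree at most `1`).  If `H` is the subgraph of `G` induced by a vertex
set `VH` and `Z_X` is the set of vertices `x ∈ X ∩ VH` with no `H`-neighbour in
`X`, then `|Z_X| ≤ |V(G) ∖ (VH ∪ {s,t})| + 1`. -/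
theorem card_isolated_in_induced_le {V : Type*} [Fintype V] [DecidableEq V]
    (G : SimpleGraph V) (s t : V) (X : Finset V) (hX : s ∉ X ∧ t ∉ X)
    (F : Finset (Sym2 V)) (hFE : ↑F ⊆ G.edgeSet)
    (hdeg0 : ∀ v : V, v ∉ X → v ≠ s → v ≠ t → (F.filter fun e => v ∈ e).card = 0)
    (hdeg2 : ∀ v ∈ X, (F.filter fun e => v ∈ e).card = 2)
    (hs : (F.filter fun e => s ∈ e).card ≤ 1)
    (ht : (F.filter fun e => t ∈ e).card ≤ 1)
    (VH : Finset V) :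
    ((X ∩ VH).filter fun x => ∀ y ∈ VH, G.Adj x y → y ∉ X).card ≤
      (Finset.univ \ (VH ∪ {s, t})).card + 1 :=
  card_isolated_in_induced_le_general G s t X F hFE hdeg0 hdeg2 hs ht VH
end
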